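/- (Theorem 1(iv), speed-limit guarantee) Let 0 < v̲ ≤ ‖v̂‖ ≤ v̄ and set ṽ = min{v̄ − ‖v̂‖, ‖v̂‖ − v̲}. Along any solution of the closed-loop multi-sUAS system whose initial Hamiltonian satisfies H(t₀) ≤ (1/2)ṽ², every agent's speed remains within the limits: v̲ ≤ ‖q̇_i(t)‖ ≤ v̄ for all t ≥ t₀ and all i. -/

import Mathlib

/-!
The Hamiltonian is a Lyapunov function: along the closed loop its derivative is
`-∑ Kᵢ ‖q̇ᵢ - v̂‖²`. The pairwise forces are minus the gradients of the pair potentials, so by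
the symmetry `i ↔ j` their power cancels the rate of change of `V_p`; the boundary forces are
normal to the planes, hence orthogonal to `v̂`, so their power relative to `v̂` cancels the rate of
change of `V_b`. Therefore `½ ‖q̇ᵢ(t) - v̂‖² ≤ H(t) ≤ H(t₀) ≤ ½ ṽ²`, and the reverse triangle
inequality keeps `‖q̇ᵢ(t)‖` within `ṽ` of `‖v̂‖`.
-/

open Finset RealInnerProductSpace

noncomputable def sigmaNorm {F : Type*} [NormedAddCommGroup F] (ε : ℝ) (z : F) : ℝ :=
  (1 / ε) * (Real.sqrt (1 + ε * ‖z‖ ^ 2) - 1)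

/-- `Φ` is the pair potential (`ψ ∘ ‖·‖_σ`), `B` the boundary potential of one agent and `v` the
reference velocity. -/
noncomputable def hamiltonian {ι F : Type*} [Fintype ι] [DecidableEq ι] [NormedAddCommGroup F]
    (Φ B : F → ℝ) (v : F) (q qv : ι → F) : ℝ :=
  (1 / 2) * ∑ i, ∑ j ∈ univ.erase i, Φ (q i - q j) + (1 / 2) * ∑ i, ‖qv i - v‖ ^ 2
    + ∑ i, B (q i)

section InnerProductSpace

variable {ι F : Type*} [NormedAddCommGroup F] [InnerProductSpace ℝ F]

theorem HasDerivAt.sigmaNorm {ε : ℝ} (hε : 0 < ε) {f : ℝ → F} {f' : F} {t : ℝ}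
    (hf : HasDerivAt f f' t) :
    HasDerivAt (fun s => sigmaNorm ε (f s))
      ((Real.sqrt (1 + ε * ‖f t‖ ^ 2))⁻¹ * ⟪f t, f'⟫) t := by
  have hpos : 0 < 1 + ε * ‖f t‖ ^ 2 := by positivity
  refine (((((hf.norm_sq.const_mul ε).const_add 1).sqrt hpos.ne').sub_const 1).const_mul
    (1 / ε)).congr_deriv ?_
  field_simp

theorem hasDerivAt_sum_comp_inner_sub [Fintype ι] (A : ι → F) (b : ι → ℝ) {ψ φ : ℝ → ℝ}
    (hψ : ∀ x, HasDerivAt ψ (φ x) x) {f : ℝ → F} {f' : F} {t : ℝ} (hf : HasDerivAt f f' t) :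
    HasDerivAt (fun s => ∑ n, ψ (⟪A n, f s⟫ - b n))
      ⟪∑ n, φ (⟪A n, f t⟫ - b n) • A n, f'⟫ t := by
  rw [sum_inner]
  refine HasDerivAt.fun_sum fun n _ => ?_
  rw [real_inner_smul_left]
  exact (hψ _).comp t
    ((((hasDerivAt_const t (A n)).inner ℝ hf).sub_const (b n)).congr_deriv (by simp))

variable [Fintype ι] [DecidableEq ι]

theorem sum_sum_erase_comm (f : ι → ι → ℝ) :
    ∑ i, ∑ j ∈ univ.erase i, f i j = ∑ i, ∑ j ∈ univ.erase i, f j i :=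
  sum_comm' fun i j => by simp [eq_comm]

theorem sum_sum_erase_mul_inner_sub_sub {w : ι → ι → ℝ} (hw : ∀ i j, w i j = w j i)
    (x v : ι → F) :
    ∑ i, ∑ j ∈ univ.erase i, w i j * ⟪x i - x j, v i - v j⟫ =
      2 * ∑ i, ∑ j ∈ univ.erase i, w i j * ⟪x i - x j, v i⟫ := by
  have hswap : ∑ i, ∑ j ∈ univ.erase i, w i j * ⟪x i - x j, v j⟫ =
      -∑ i, ∑ j ∈ univ.erase i, w i j * ⟪x i - x j, v i⟫ := by
    rw [sum_sum_erase_comm, ← sum_neg_distrib]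
    refine sum_congr rfl fun i _ => ?_
    rw [← sum_neg_distrib]
    refine sum_congr rfl fun j _ => ?_
    rw [hw, ← neg_sub (x i), inner_neg_left, mul_neg]
  simp only [inner_sub_right, mul_sub, sum_sub_distrib, hswap]
  ring

/-- `hΦ` says, along curves, that `∇Φ z = w z • z`, and `hB` that `∇B = gB`. -/
theorem hasDerivAt_hamiltonian {Φ w B : F → ℝ} {gB : F → F} {v : F} {K : ι → ℝ}
    {q qv : ι → ℝ → F} {t : ℝ}
    (hΦ : ∀ {f : ℝ → F} {f' : F}, HasDerivAt f f' t →
      HasDerivAt (fun s => Φ (f s)) (w (f t) * ⟪f t, f'⟫) t)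
    (hw : ∀ z, w (-z) = w z)
    (hB : ∀ {f : ℝ → F} {f' : F}, HasDerivAt f f' t →
      HasDerivAt (fun s => B (f s)) ⟪gB (f t), f'⟫ t)
    (hgB : ∀ x, ⟪gB x, v⟫ = 0)
    (hq : ∀ i, HasDerivAt (q i) (qv i t) t)
    (hqv : ∀ i, HasDerivAt (qv i)
      (-(∑ j ∈ univ.erase i, w (q i t - q j t) • (q i t - q j t)) - gB (q i t)
        - K i • (qv i t - v)) t) :
    HasDerivAt (fun s => hamiltonian Φ B v (fun i => q i s) (fun i => qv i s))
      (-∑ i, K i * ‖qv i t - v‖ ^ 2) t := by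
  have hpair := (HasDerivAt.fun_sum (u := univ) fun i _ =>
    HasDerivAt.fun_sum (u := univ.erase i) fun j _ =>
      hΦ ((hq i).fun_sub (hq j))).const_mul (1 / 2 : ℝ)
  have hkin := (HasDerivAt.fun_sum (u := univ) fun i _ =>
    ((hqv i).sub_const v).norm_sq).const_mul (1 / 2 : ℝ)
  have hbdry := HasDerivAt.fun_sum (u := univ) fun i _ => hB (hq i)
  refine ((hpair.fun_add hkin).fun_add hbdry).congr_deriv ?_
  have hpair_eq : ∑ i, ∑ j ∈ univ.erase i,
      w (q i t - q j t) * ⟪q i t - q j t, qv i t - qv j t⟫ =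
      2 * ∑ i, ∑ j ∈ univ.erase i, w (q i t - q j t) * ⟪q i t - q j t, qv i t - v⟫ := by
    simpa only [sub_sub_sub_cancel_right] using sum_sum_erase_mul_inner_sub_sub
      (w := fun i j => w (q i t - q j t)) (fun i j => by rw [← hw, neg_sub])
      (fun i => q i t) (fun i => qv i t - v)
  have hpower : ∀ i, ⟪qv i t - v, -(∑ j ∈ univ.erase i, w (q i t - q j t) • (q i t - q j t))
      - gB (q i t) - K i • (qv i t - v)⟫ =
      -(∑ j ∈ univ.erase i, w (q i t - q j t) * ⟪q i t - q j t, qv i t - v⟫)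
        - ⟪gB (q i t), qv i t⟫ - K i * ‖qv i t - v‖ ^ 2 := fun i => by
    have hg : ⟪qv i t - v, gB (q i t)⟫ = ⟪gB (q i t), qv i t⟫ := by
      rw [real_inner_comm, inner_sub_right, hgB, sub_zero]
    rw [inner_sub_right, inner_sub_right, inner_neg_right, inner_sum, hg, real_inner_smul_right,
      real_inner_self_eq_norm_sq]
    simp only [real_inner_comm _ (qv i t - v), real_inner_smul_left]
  simp only [hpair_eq, hpower, mul_sub, mul_neg, sum_sub_distrib, sum_neg_distrib, ← mul_sum]
  ring

end InnerProductSpace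

theorem norm_sub_sq_le_two_mul_hamiltonian {ι F : Type*} [Fintype ι] [DecidableEq ι]
    [NormedAddCommGroup F] {Φ B : F → ℝ} (hΦ : ∀ z, 0 ≤ Φ z) (hB : ∀ x, 0 ≤ B x) {v : F}
    {q qv : ι → F} (i : ι) :
    ‖qv i - v‖ ^ 2 ≤ 2 * hamiltonian Φ B v q qv := by
  have hpair : 0 ≤ ∑ i, ∑ j ∈ univ.erase i, Φ (q i - q j) :=
    sum_nonneg fun _ _ => sum_nonneg fun _ _ => hΦ _
  have hbdry : 0 ≤ ∑ i, B (q i) := sum_nonneg fun _ _ => hB _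
  have hkin : ‖qv i - v‖ ^ 2 ≤ ∑ j, ‖qv j - v‖ ^ 2 :=
    single_le_sum (f := fun j => ‖qv j - v‖ ^ 2) (fun _ _ => sq_nonneg _) (mem_univ i)
  unfold hamiltonian
  linarith

theorem norm_mem_Icc_of_norm_sub_le_min {E : Type*} [SeminormedAddCommGroup E] {u v : E}
    {vlo vhi : ℝ} (h : ‖u - v‖ ≤ min (vhi - ‖v‖) (‖v‖ - vlo)) : ‖u‖ ∈ Set.Icc vlo vhi := by
  have hu := norm_sub_norm_le u v
  have hv := norm_sub_norm_le v u
  rw [norm_sub_rev] at hv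
  have hhi := min_le_left (vhi - ‖v‖) (‖v‖ - vlo)
  have hlo := min_le_right (vhi - ‖v‖) (‖v‖ - vlo)
  constructor <;> linarith

theorem speed_limit_guarantee_general
    (N m : ℕ) (ε : ℝ) (hε : 0 < ε)
    -- agent positions and velocities
    (q qv : Fin N → ℝ → EuclideanSpace ℝ (Fin 3))
    -- boundary planes
    (A : Fin m → EuclideanSpace ℝ (Fin 3)) (b : Fin m → ℝ)
    -- reference velocity, parallel to every boundary plane
    (vhat : EuclideanSpace ℝ (Fin 3)) (hvhat : ∀ n, ⟪A n, vhat⟫ = 0)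
    -- potential functions
    (ψ ψb φ φb : ℝ → ℝ)
    (hψnn : ∀ d, 0 ≤ ψ d)
    (hψC1 : ContDiff ℝ 1 ψ) (hφ : deriv ψ = φ)
    (hψbnn : ∀ d, 0 ≤ ψb d)
    (hψbC1 : ContDiff ℝ 1 ψb) (hφb : deriv ψb = φb)
    -- damping gains
    (K : Fin N → ℝ) (hK : ∀ i, 0 < K i)
    -- closed-loop double-integrator dynamics  q̈ᵢ = uᵢ
    (hq : ∀ i t, HasDerivAt (q i) (qv i t) t)
    (hqv : ∀ i t, HasDerivAt (qv i)
      (-(∑ j ∈ univ.erase i,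
          (φ ((1 / ε) * (Real.sqrt (1 + ε * ‖q i t - q j t‖ ^ 2) - 1)) *
            (Real.sqrt (1 + ε * ‖q i t - q j t‖ ^ 2))⁻¹) • (q i t - q j t))
        - (∑ n, φb (⟪A n, q i t⟫ - b n) • A n)
        - K i • (qv i t - vhat)) t)
    -- the Hamiltonian  H = V_p + V_k + V_b
    (t₀ : ℝ) (H : ℝ → ℝ)
    (hH : ∀ t, H t =
      (1 / 2) * ∑ i, ∑ j ∈ univ.erase i,
          ψ ((1 / ε) * (Real.sqrt (1 + ε * ‖q i t - q j t‖ ^ 2) - 1))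
      + (1 / 2) * ∑ i, ‖qv i t - vhat‖ ^ 2
      + ∑ i, ∑ n, ψb (⟪A n, q i t⟫ - b n))
    -- speed limits and initial-energy sublevel condition
    (vlo vhi : ℝ) (hlo : vlo ≤ ‖vhat‖) (hhi : ‖vhat‖ ≤ vhi)
    (hc : H t₀ ≤ (1 / 2) * (min (vhi - ‖vhat‖) (‖vhat‖ - vlo)) ^ 2) :
    ∀ t, t₀ ≤ t → ∀ i : Fin N, vlo ≤ ‖qv i t‖ ∧ ‖qv i t‖ ≤ vhi := by
  have hψ : ∀ x, HasDerivAt ψ (φ x) x := fun x =>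
    hφ ▸ (hψC1.differentiable one_ne_zero x).hasDerivAt
  have hψb : ∀ x, HasDerivAt ψb (φb x) x := fun x =>
    hφb ▸ (hψbC1.differentiable one_ne_zero x).hasDerivAt
  have hHam : H = fun t => hamiltonian (fun z => ψ (sigmaNorm ε z))
      (fun x => ∑ n, ψb (⟪A n, x⟫ - b n)) vhat (fun i => q i t) (fun i => qv i t) := funext hH
  have hH' : ∀ t, HasDerivAt H (-∑ i, K i * ‖qv i t - vhat‖ ^ 2) t := fun t => by
    rw [hHam]
    refine hasDerivAt_hamiltonian (w := fun z => φ (sigmaNorm ε z) * (√(1 + ε * ‖z‖ ^ 2))⁻¹)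
      (gB := fun x => ∑ n, φb (⟪A n, x⟫ - b n) • A n)
      (fun hf => ((hψ _).comp t (hf.sigmaNorm hε)).congr_deriv (mul_assoc _ _ _).symm)
      (fun z => by simp only [sigmaNorm, norm_neg]) (hasDerivAt_sum_comp_inner_sub A b hψb)
      (fun x => ?_) (hq · t) (hqv · t)
    simp [sum_inner, real_inner_smul_left, hvhat]
  have hanti : Antitone H := antitone_of_deriv_nonpos (fun t => (hH' t).differentiableAt)
    fun t => by
      rw [(hH' t).deriv, neg_nonpos]
      exact sum_nonneg fun i _ => mul_nonneg (hK i).le (sq_nonneg _)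
  intro t ht i
  have hkin : ‖qv i t - vhat‖ ^ 2 ≤ 2 * H t := by
    have := norm_sub_sq_le_two_mul_hamiltonian (Φ := fun z => ψ (sigmaNorm ε z))
      (B := fun x => ∑ n, ψb (⟪A n, x⟫ - b n)) (fun _ => hψnn _)
      (fun _ => sum_nonneg fun _ _ => hψbnn _) (v := vhat) (q := (q · t)) (qv := (qv · t)) i
    rw [hHam]
    exact this
  have hmin : 0 ≤ min (vhi - ‖vhat‖) (‖vhat‖ - vlo) :=
    le_min (sub_nonneg.2 hhi) (sub_nonneg.2 hlo)
  refine norm_mem_Icc_of_norm_sub_le_min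
    ((pow_le_pow_iff_left₀ (norm_nonneg _) hmin two_ne_zero).1 ?_)
  linarith [hanti ht]

/-- Theorem 1(iv), speed-limit guarantee: with
`0 < v̲ ≤ ‖v̂‖ ≤ v̄` and `ṽ = min{v̄ − ‖v̂‖, ‖v̂‖ − v̲}`, if the initial Hamiltonian
satisfies `H(t₀) ≤ (1/2)ṽ²`, then every agent's speed remains within the limits:
`v̲ ≤ ‖q̇ᵢ(t)‖ ≤ v̄` for all `t ≥ t₀`. -/
theorem speed_limit_guarantee
    (N m : ℕ) (ε : ℝ) (hε : 0 < ε)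
    -- agent positions and velocities
    (q qv : Fin N → ℝ → EuclideanSpace ℝ (Fin 3))
    -- boundary planes
    (A : Fin m → EuclideanSpace ℝ (Fin 3)) (b : Fin m → ℝ)
    (hA : ∀ n, ‖A n‖ = 1)
    -- reference velocity, parallel to every boundary plane
    (vhat : EuclideanSpace ℝ (Fin 3)) (hvhat : ∀ n, ⟪A n, vhat⟫ = 0)
    -- potential functions
    (dhat dbhat : ℝ) (ψ ψb φ φb : ℝ → ℝ)
    (hψnn : ∀ d, 0 ≤ ψ d) (hψanti : Antitone ψ)
    (hψC1 : ContDiff ℝ 1 ψ) (hφ : deriv ψ = φ)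
    (hψ0 : ∀ d, ψ d = 0 ↔ dhat ≤ d) (hψpos : ∀ d, 0 < ψ d ↔ d < dhat)
    (hψbnn : ∀ d, 0 ≤ ψb d) (hψbanti : Antitone ψb)
    (hψbC1 : ContDiff ℝ 1 ψb) (hφb : deriv ψb = φb)
    (hψb0 : ∀ d, ψb d = 0 ↔ dbhat ≤ d) (hψbpos : ∀ d, 0 < ψb d ↔ d < dbhat)
    -- damping gains
    (K : Fin N → ℝ) (hK : ∀ i, 0 < K i)
    -- closed-loop double-integrator dynamics  q̈ᵢ = uᵢ
    (hq : ∀ i t, HasDerivAt (q i) (qv i t) t)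
    (hqv : ∀ i t, HasDerivAt (qv i)
      (-(∑ j ∈ univ.erase i,
          (φ ((1 / ε) * (Real.sqrt (1 + ε * ‖q i t - q j t‖ ^ 2) - 1)) *
            (Real.sqrt (1 + ε * ‖q i t - q j t‖ ^ 2))⁻¹) • (q i t - q j t))
        - (∑ n, φb (⟪A n, q i t⟫ - b n) • A n)
        - K i • (qv i t - vhat)) t)
    -- the Hamiltonian  H = V_p + V_k + V_b
    (t₀ : ℝ) (H : ℝ → ℝ)
    (hH : ∀ t, H t =
      (1 / 2) * ∑ i, ∑ j ∈ univ.erase i,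
          ψ ((1 / ε) * (Real.sqrt (1 + ε * ‖q i t - q j t‖ ^ 2) - 1))
      + (1 / 2) * ∑ i, ‖qv i t - vhat‖ ^ 2
      + ∑ i, ∑ n, ψb (⟪A n, q i t⟫ - b n))
    -- speed limits and initial-energy sublevel condition
    (vlo vhi : ℝ) (hvlo : 0 < vlo) (hlo : vlo ≤ ‖vhat‖) (hhi : ‖vhat‖ ≤ vhi)
    (hc : H t₀ ≤ (1 / 2) * (min (vhi - ‖vhat‖) (‖vhat‖ - vlo)) ^ 2) :
    ∀ t, t₀ ≤ t → ∀ i : Fin N, vlo ≤ ‖qv i t‖ ∧ ‖qv i t‖ ≤ vhi :=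
  speed_limit_guarantee_general N m ε hε q qv A b vhat hvhat ψ ψb φ φb hψnn hψC1 hφ hψbnn hψbC1 hφb
    K hK hq hqv t₀ H hH vlo vhi hlo hhi hc
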